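/- Consider the contraction ∑_{i_b,i_c} A_{i_a,i_b,i_c} B_{i_b,i_d} C_{i_c,i_e} with a Trotterized tensor A of t gate layers and Trotter dimension χ_T, where i_a ∈ [1,χ_T], and bond dimensions χ_b = χ_c = χ², χ_d = χ_e = χ, χ_T = χ⁴. If t ≥ χ, then the cost t·χ_d·χ_e·χ_T + χ_b·χ_c·χ_d·χ_e of the sequence A(BC), which forms the outer product BC first, is at most the cost t·χ_c·χ_d·χ_T + χ_c·χ_d·χ_e·χ_T of the sequence (AB)C and also at most the cost t·χ_b·χ_e·χ_T + χ_b·χ_d·χ_e·χ_T of (AC)B. -/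

import Mathlib

/-!
Forming the outer product `BC` first trades the `t`-layer sweep over `χ_T χ_c χ_d` (resp.
`χ_T χ_b χ_e`) for one over `χ_T χ_d χ_e`, and the final contraction over `χ_c χ_d χ_e χ_T`
(resp. `χ_b χ_d χ_e χ_T`) for the outer product `χ_b χ_c χ_d χ_e`. So `A(BC)` wins termwise
as soon as the free dimensions are no larger than the shared ones and the shared ones no larger
than `χ_T`; with `χ_d = χ_e = χ ≤ χ² = χ_b = χ_c ≤ χ⁴ = χ_T` this holds for every `t`.
-/

namespace TrotterContraction

def costAB_C (t χT χc χd χe : ℕ) : ℕ := t * χc * χd * χT + χc * χd * χe * χT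

def costAC_B (t χT χb χd χe : ℕ) : ℕ := t * χb * χe * χT + χb * χd * χe * χT

def costA_BC (t χT χb χc χd χe : ℕ) : ℕ := t * χd * χe * χT + χb * χc * χd * χe

variable {t χT χb χc χd χe : ℕ}

theorem costA_BC_le_costAB_C (he : χe ≤ χc) (hb : χb ≤ χT) :
    costA_BC t χT χb χc χd χe ≤ costAB_C t χT χc χd χe :=
  calc costA_BC t χT χb χc χd χe = t * χd * χe * χT + χb * (χc * χd * χe) := by
        unfold costA_BC; ring
    _ ≤ t * χd * χc * χT + χT * (χc * χd * χe) := by gcongr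
    _ = costAB_C t χT χc χd χe := by unfold costAB_C; ring

theorem costA_BC_le_costAC_B (hd : χd ≤ χb) (hc : χc ≤ χT) :
    costA_BC t χT χb χc χd χe ≤ costAC_B t χT χb χd χe :=
  calc costA_BC t χT χb χc χd χe = t * χd * χe * χT + χc * (χb * χd * χe) := by
        unfold costA_BC; ring
    _ ≤ t * χb * χe * χT + χT * (χb * χd * χe) := by gcongr
    _ = costAC_B t χT χb χd χe := by unfold costAC_B; ring

end TrotterContraction

theorem outer_product_sequence_optimal_general
    (χ t : ℕ) :
    t * χ * χ * χ ^ 4 + χ ^ 2 * χ ^ 2 * χ * χ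
        ≤ t * χ ^ 2 * χ * χ ^ 4 + χ ^ 2 * χ * χ * χ ^ 4
    ∧ t * χ * χ * χ ^ 4 + χ ^ 2 * χ ^ 2 * χ * χ
        ≤ t * χ ^ 2 * χ * χ ^ 4 + χ ^ 2 * χ * χ * χ ^ 4 := by
  have free_le_shared : χ ≤ χ ^ 2 := Nat.le_self_pow two_ne_zero χ
  have shared_le_trotter : χ ^ 2 ≤ χ ^ 4 :=
    (Nat.le_self_pow two_ne_zero (χ ^ 2)).trans_eq (by ring)
  exact ⟨TrotterContraction.costA_BC_le_costAB_C (t := t) (χd := χ)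
      free_le_shared shared_le_trotter,
    TrotterContraction.costA_BC_le_costAC_B (t := t) (χe := χ)
      free_le_shared shared_le_trotter⟩

/-- With a Trotterized tensor A (Trotter dimension χ_T = χ⁴, t gate layers) and
bond dimensions χ_b = χ_c = χ², χ_d = χ_e = χ: if t ≥ χ, then the sequence
A(BC) forming the outer product BC first is at most as costly as (AB)C and as
(AC)B. -/
theorem outer_product_sequence_optimal
    (χ t : ℕ) (hχ : 2 ≤ χ) (ht : χ ≤ t) :
    t * χ * χ * χ ^ 4 + χ ^ 2 * χ ^ 2 * χ * χ
        ≤ t * χ ^ 2 * χ * χ ^ 4 + χ ^ 2 * χ * χ * χ ^ 4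
    ∧ t * χ * χ * χ ^ 4 + χ ^ 2 * χ ^ 2 * χ * χ
        ≤ t * χ ^ 2 * χ * χ ^ 4 + χ ^ 2 * χ * χ * χ ^ 4 :=
  outer_product_sequence_optimal_general χ t
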